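/- The comultiplication Δ of U_q(sl3) satisfies Δ(B_1) = B_1 ⊗ K_1^{-1} + 1 ⊗ F_1 - c_1 K^{-1} ⊗ E_2 K_1^{-1}, where B_1 = F_1 - c_1 E_2 K_1^{-1} and K = K_1 K_2^{-1}. In particular Δ(B_1) ∈ B ⊗ U_q(sl3) where B is the subalgebra generated by K^{±1}, B_1, B_2. -/
import Mathlib


noncomputable section

/-- The defining relations of `U_q(sl3)` inside a `ℂ`-algebra `R`, with real `q`. -/
structure UqSL3 (R : Type*) [Ring R] [Algebra ℂ R] (q : ℝ)
    (E₁ E₂ F₁ F₂ K₁ K₁' K₂ K₂' : R) : Prop where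
  K₁mul : K₁ * K₁' = 1
  K₁mul' : K₁' * K₁ = 1
  K₂mul : K₂ * K₂' = 1
  K₂mul' : K₂' * K₂ = 1
  Kcomm : K₁ * K₂ = K₂ * K₁
  Kcomm' : K₁ * K₂' = K₂' * K₁
  Kcomm'' : K₁' * K₂ = K₂ * K₁'
  KE11 : K₁ * E₁ = ((q:ℂ) ^ (2:ℤ)) • (E₁ * K₁)
  KE12 : K₁ * E₂ = ((q:ℂ) ^ (-1:ℤ)) • (E₂ * K₁)
  KE21 : K₂ * E₁ = ((q:ℂ) ^ (-1:ℤ)) • (E₁ * K₂)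
  KE22 : K₂ * E₂ = ((q:ℂ) ^ (2:ℤ)) • (E₂ * K₂)
  KF11 : K₁ * F₁ = ((q:ℂ) ^ (-2:ℤ)) • (F₁ * K₁)
  KF12 : K₁ * F₂ = ((q:ℂ) ^ (1:ℤ)) • (F₂ * K₁)
  KF21 : K₂ * F₁ = ((q:ℂ) ^ (1:ℤ)) • (F₁ * K₂)
  KF22 : K₂ * F₂ = ((q:ℂ) ^ (-2:ℤ)) • (F₂ * K₂)
  EF11 : E₁ * F₁ - F₁ * E₁ = ((q:ℂ) - (q:ℂ)⁻¹)⁻¹ • (K₁ - K₁')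
  EF22 : E₂ * F₂ - F₂ * E₂ = ((q:ℂ) - (q:ℂ)⁻¹)⁻¹ • (K₂ - K₂')
  EF12 : E₁ * F₂ = F₂ * E₁
  EF21 : E₂ * F₁ = F₁ * E₂
  serreE₁ : E₁ ^ 2 * E₂ - ((q:ℂ) + (q:ℂ)⁻¹) • (E₁ * E₂ * E₁) + E₂ * E₁ ^ 2 = 0
  serreE₂ : E₂ ^ 2 * E₁ - ((q:ℂ) + (q:ℂ)⁻¹) • (E₂ * E₁ * E₂) + E₁ * E₂ ^ 2 = 0
  serreF₁ : F₁ ^ 2 * F₂ - ((q:ℂ) + (q:ℂ)⁻¹) • (F₁ * F₂ * F₁) + F₂ * F₁ ^ 2 = 0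
  serreF₂ : F₂ ^ 2 * F₁ - ((q:ℂ) + (q:ℂ)⁻¹) • (F₂ * F₁ * F₂) + F₁ * F₂ ^ 2 = 0

open scoped TensorProduct

set_option synthInstance.maxHeartbeats 800000 in
theorem stmt {R : Type*} [Ring R] [Algebra ℂ R] (q : ℝ) (hq0 : 0 < q) (hq1 : q < 1)
    (c₁ c₂ : ℂ)
    (E₁ E₂ F₁ F₂ K₁ K₁' K₂ K₂' : R)
    (h : UqSL3 R q E₁ E₂ F₁ F₂ K₁ K₁' K₂ K₂')
    (Δ : R →ₐ[ℂ] R ⊗[ℂ] R)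
    (hΔE₁ : Δ E₁ = E₁ ⊗ₜ 1 + K₁ ⊗ₜ E₁) (hΔE₂ : Δ E₂ = E₂ ⊗ₜ 1 + K₂ ⊗ₜ E₂)
    (hΔF₁ : Δ F₁ = F₁ ⊗ₜ K₁' + 1 ⊗ₜ F₁) (hΔF₂ : Δ F₂ = F₂ ⊗ₜ K₂' + 1 ⊗ₜ F₂)
    (hΔK₁ : Δ K₁ = K₁ ⊗ₜ K₁) (hΔK₂ : Δ K₂ = K₂ ⊗ₜ K₂)
    (hΔK₁' : Δ K₁' = K₁' ⊗ₜ K₁') (hΔK₂' : Δ K₂' = K₂' ⊗ₜ K₂')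
    (B : Subalgebra ℂ R)
    (hB : B = Algebra.adjoin ℂ ({K₁ * K₂', K₁' * K₂,
      F₁ - c₁ • (E₂ * K₁'), F₂ - c₂ • (E₁ * K₂')} : Set R)) :
    Δ (F₁ - c₁ • (E₂ * K₁'))
      = (F₁ - c₁ • (E₂ * K₁')) ⊗ₜ K₁' + 1 ⊗ₜ F₁ - c₁ • ((K₁' * K₂) ⊗ₜ (E₂ * K₁')) ∧
    Δ (F₁ - c₁ • (E₂ * K₁'))
      ∈ (Algebra.TensorProduct.map B.val (AlgHom.id ℂ R)).range := by
  have key : Δ (F₁ - c₁ • (E₂ * K₁'))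
      = (F₁ - c₁ • (E₂ * K₁')) ⊗ₜ K₁' + 1 ⊗ₜ F₁ - c₁ • ((K₁' * K₂) ⊗ₜ (E₂ * K₁')) := by
    rw [map_sub, map_smul, map_mul, hΔF₁, hΔE₂, hΔK₁']
    rw [add_mul, Algebra.TensorProduct.tmul_mul_tmul, Algebra.TensorProduct.tmul_mul_tmul,
      one_mul, ← h.Kcomm'']
    rw [TensorProduct.sub_tmul, smul_add, TensorProduct.smul_tmul']
    abel
  refine ⟨key, ?_⟩
  have hb1 : F₁ - c₁ • (E₂ * K₁') ∈ B := by
    rw [hB]; exact Algebra.subset_adjoin (by simp)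
  have hb2 : K₁' * K₂ ∈ B := by
    rw [hB]; exact Algebra.subset_adjoin (by simp)
  refine ⟨(⟨F₁ - c₁ • (E₂ * K₁'), hb1⟩ : B) ⊗ₜ K₁' + (1 : B) ⊗ₜ F₁
    - (⟨K₁' * K₂, hb2⟩ : B) ⊗ₜ (c₁ • (E₂ * K₁')), ?_⟩
  rw [key]
  simp only [AlgHom.toRingHom_eq_coe, RingHom.coe_coe, map_sub, map_add,
    Algebra.TensorProduct.map_tmul, AlgHom.coe_id, id_eq, Subalgebra.coe_val,
    OneMemClass.coe_one, TensorProduct.tmul_smul, map_smul]
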